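/- arXiv:2412.17797 — 4 statements merged into one kernel-verified Lean document; each statement's English description precedes it below -/
import Mathlib

section
/- If a family of distributions P_a is strictly more informative (in the Blackwell sense) than its garbling P_b, then observing X_a (sampled from P_a given the state) yields strictly lower expected posterior entropy of the state than observing X_b = F(X_a): E_{X_a}[H(P(S | X_a))] < E_{X_b}[H(P(S | X_b))]. -/
/-!
Write `X` for the observation drawn from `Pa` and `X' = F(X)`. For each value `x'`, the posterior
of the state given `X' = x'` is the mixture of the posteriors given `X = x` with weights
`P(X = x | X' = x')`, so concavity of `negMulLog` (Jensen) gives `H(S | X) ≤ H(S | X')`.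
By strict concavity, equality forces `P(s | x) = P(s | x')` whenever `P(x, x') > 0`; then the
Bayes kernel `x' ↦ P(X = x | X' = x')` garbles `Pb` back into `Pa`, contradicting strictness.
-/

open Real Finset

/-- Shannon entropy of a distribution on a finite type. -/
noncomputable def entropy {α : Type*} [Fintype α] (p : α → ℝ) : ℝ :=
  -∑ x, p x * Real.log (p x)

/-- Expected posterior entropy of the state `S ~ μ` after seeing an observation
drawn from the kernel `K` applied to `S`. -/
noncomputable def expPostEntropy {S Ω : Type*} [Fintype S] [Fintype Ω]
    (μ : S → ℝ) (K : S → Ω → ℝ) : ℝ :=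
  ∑ x, (∑ s, μ s * K s x) *
    entropy (fun s => μ s * K s x / (∑ s', μ s' * K s' x))

/-- A stochastic function (Markov kernel): nonnegative entries, rows summing to 1. -/
def IsKernel {Ω Ω' : Type*} [Fintype Ω'] (F : Ω → Ω' → ℝ) : Prop :=
  (∀ x x', 0 ≤ F x x') ∧ ∀ x, ∑ x', F x x' = 1

/-- Blackwell order: `Q` is at most as informative as `P` if `Q` is a garbling of `P`. -/
def AtMostAsInformative {S Ω : Type*} [Fintype S] [Fintype Ω]
    (Q P : S → Ω → ℝ) : Prop :=
  ∃ F : Ω → Ω → ℝ, IsKernel F ∧ ∀ s x', Q s x' = ∑ x, P s x * F x x'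

lemma entropy_eq_sum_negMulLog {α : Type*} [Fintype α] (p : α → ℝ) :
    entropy p = ∑ x, negMulLog (p x) := by
  simp [entropy, negMulLog_def, sum_neg_distrib]

lemma sum_mul_div_sum_self_of_nonneg {ι : Type*} [Fintype ι] {q : ι → ℝ}
    (hq : ∀ i, 0 ≤ q i) (i : ι) : (∑ j, q j) * (q i / ∑ j, q j) = q i :=
  mul_div_cancel_of_imp' fun h => (sum_eq_zero_iff_of_nonneg fun j _ => hq j).1 h i (mem_univ i)

section Perspective

variable {ι : Type*} [Fintype ι] {w p : ι → ℝ}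

lemma sum_div_smul_eq_sum_mul_div (f : ι → ℝ) :
    ∑ i, (w i / ∑ j, w j) • f i = (∑ i, w i * f i) / ∑ j, w j := by
  simp only [smul_eq_mul, div_mul_eq_mul_div, sum_div]

lemma sum_mul_negMulLog_le (hw : ∀ i, 0 ≤ w i) (hp : ∀ i, 0 ≤ p i) :
    ∑ i, w i * negMulLog (p i) ≤
      (∑ i, w i) * negMulLog ((∑ i, w i * p i) / ∑ i, w i) := by
  rcases (sum_nonneg fun i _ => hw i).eq_or_lt with hW | hW
  · have hw0 : ∀ i, w i = 0 := fun i =>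
      (sum_eq_zero_iff_of_nonneg fun j _ => hw j).1 hW.symm i (mem_univ i)
    simp [hw0]
  · have := concaveOn_negMulLog.le_map_sum (t := univ) (p := p)
      (fun i _ => div_nonneg (hw i) hW.le) (by rw [← sum_div, div_self hW.ne']) (fun i _ => hp i)
    rwa [sum_div_smul_eq_sum_mul_div, sum_div_smul_eq_sum_mul_div, div_le_iff₀' hW] at this

lemma eq_div_of_sum_mul_negMulLog_eq (hw : ∀ i, 0 ≤ w i) (hp : ∀ i, 0 ≤ p i)
    (h : ∑ i, w i * negMulLog (p i) = (∑ i, w i) * negMulLog ((∑ i, w i * p i) / ∑ i, w i))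
    {i : ι} (hi : w i ≠ 0) : p i = (∑ j, w j * p j) / ∑ j, w j := by
  have hW : 0 < ∑ j, w j :=
    (lt_of_le_of_ne (hw i) hi.symm).trans_le (single_le_sum (fun j _ => hw j) (mem_univ i))
  have hjensen := strictConcaveOn_negMulLog.map_sum_eq_iff' (t := univ) (p := p)
    (fun i _ => div_nonneg (hw i) hW.le) (by rw [← sum_div, div_self hW.ne']) (fun i _ => hp i)
  rw [sum_div_smul_eq_sum_mul_div, sum_div_smul_eq_sum_mul_div, h,
    mul_div_cancel_left₀ _ hW.ne'] at hjensen
  exact hjensen.1 rfl i (mem_univ i) (div_ne_zero hi hW.ne')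

end Perspective

-- `H(S | X)` for unnormalised joint weights `q s x` of the state `s` and the observation `x`.
noncomputable def condEntropy {L Ω : Type*} [Fintype L] [Fintype Ω]
    (q : L → Ω → ℝ) : ℝ :=
  ∑ x, ∑ s, (∑ t, q t x) * negMulLog (q s x / ∑ t, q t x)

lemma expPostEntropy_eq_condEntropy {L Ω : Type*} [Fintype L] [Fintype Ω] (μ : L → ℝ)
    (K : L → Ω → ℝ) : expPostEntropy μ K = condEntropy fun s x => μ s * K s x := by
  simp only [expPostEntropy, condEntropy, entropy_eq_sum_negMulLog, mul_sum]

section Garbling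

variable {L Ω Ω' : Type*} [Fintype L] [Fintype Ω]
  {q : L → Ω → ℝ} {r : L → Ω' → ℝ} {F : Ω → Ω' → ℝ}

lemma sum_garbling (hr : ∀ s x', r s x' = ∑ x, q s x * F x x') (x' : Ω') :
    ∑ s, r s x' = ∑ x, (∑ s, q s x) * F x x' := by
  simp only [hr, sum_mul]
  exact sum_comm

lemma condEntropy_eq_sum_garbling [Fintype Ω'] (hF : ∀ x, ∑ x', F x x' = 1)
    (q : L → Ω → ℝ) :
    condEntropy q =
      ∑ x', ∑ s, ∑ x, (∑ t, q t x) * F x x' * negMulLog (q s x / ∑ t, q t x) := by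
  rw [sum_comm, condEntropy, sum_comm]
  refine sum_congr rfl fun s _ => ?_
  rw [sum_comm]
  refine sum_congr rfl fun x _ => ?_
  rw [← sum_mul, ← mul_sum, hF, mul_one]

lemma sum_mul_posterior_of_garbling (hq : ∀ s x, 0 ≤ q s x)
    (hr : ∀ s x', r s x' = ∑ x, q s x * F x x') (s : L) (x' : Ω') :
    ∑ x, (∑ t, q t x) * F x x' * (q s x / ∑ t, q t x) = r s x' := by
  simp only [hr, mul_right_comm _ (F _ _), sum_mul_div_sum_self_of_nonneg (hq · _)]

lemma sum_mul_negMulLog_posterior_le (hq : ∀ s x, 0 ≤ q s x) (hF : ∀ x x', 0 ≤ F x x')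
    (hr : ∀ s x', r s x' = ∑ x, q s x * F x x') (s : L) (x' : Ω') :
    ∑ x, (∑ t, q t x) * F x x' * negMulLog (q s x / ∑ t, q t x) ≤
      (∑ t, r t x') * negMulLog (r s x' / ∑ t, r t x') := by
  have := sum_mul_negMulLog_le (w := fun x => (∑ t, q t x) * F x x')
    (p := fun x => q s x / ∑ t, q t x)
    (fun x => mul_nonneg (sum_nonneg fun t _ => hq t x) (hF x x'))
    fun x => div_nonneg (hq s x) (sum_nonneg fun t _ => hq t x)
  rwa [sum_mul_posterior_of_garbling hq hr, ← sum_garbling hr] at this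

lemma condEntropy_le_of_garbling [Fintype Ω'] (hq : ∀ s x, 0 ≤ q s x) (hF : IsKernel F)
    (hr : ∀ s x', r s x' = ∑ x, q s x * F x x') : condEntropy q ≤ condEntropy r := by
  rw [condEntropy_eq_sum_garbling hF.2]
  exact sum_le_sum fun x' _ => sum_le_sum fun s _ => sum_mul_negMulLog_posterior_le hq hF.1 hr s x'

lemma posterior_eq_of_condEntropy_eq [Fintype Ω'] (hq : ∀ s x, 0 ≤ q s x) (hF : IsKernel F)
    (hr : ∀ s x', r s x' = ∑ x, q s x * F x x') (heq : condEntropy q = condEntropy r)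
    (s : L) (x : Ω) (x' : Ω') (hx : (∑ t, q t x) * F x x' ≠ 0) :
    q s x / ∑ t, q t x = r s x' / ∑ t, r t x' := by
  rw [condEntropy_eq_sum_garbling hF.2] at heq
  have hle := fun x' s => sum_mul_negMulLog_posterior_le hq hF.1 hr s x'
  have hterm := (sum_eq_sum_iff_of_le fun s _ => hle x' s).1
    ((sum_eq_sum_iff_of_le fun x' _ => sum_le_sum fun s _ => hle x' s).1 heq x' (mem_univ x'))
    s (mem_univ s)
  have := eq_div_of_sum_mul_negMulLog_eq (w := fun x => (∑ t, q t x) * F x x')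
    (p := fun x => q s x / ∑ t, q t x)
    (fun x => mul_nonneg (sum_nonneg fun t _ => hq t x) (hF.1 x x'))
    (fun x => div_nonneg (hq s x) (sum_nonneg fun t _ => hq t x))
    (by rwa [sum_mul_posterior_of_garbling hq hr, ← sum_garbling hr]) hx
  rwa [sum_mul_posterior_of_garbling hq hr, ← sum_garbling hr] at this

end Garbling

-- Bayes' rule for `x` given `x'` when `x ~ m` and `x' ~ F x`; rows of probability zero are sent
-- to a point mass.
open Classical in
noncomputable def bayesReverse {Ω : Type*} [Fintype Ω] (m : Ω → ℝ) (F : Ω → Ω → ℝ)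
    (x' x : Ω) : ℝ :=
  if ∑ y, m y * F y x' = 0 then if x = x' then 1 else 0 else m x * F x x' / ∑ y, m y * F y x'

section Reverse

variable {L Ω : Type*} [Fintype L] [Fintype Ω] {q r : L → Ω → ℝ} {F : Ω → Ω → ℝ}

lemma isKernel_bayesReverse {m : Ω → ℝ} (hm : ∀ x, 0 ≤ m x) (hF : ∀ x x', 0 ≤ F x x') :
    IsKernel (bayesReverse m F) := by
  classical
  refine ⟨fun x' x => ?_, fun x' => ?_⟩
  · unfold bayesReverse
    split_ifs
    · exact zero_le_one
    · exact le_rfl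
    · exact div_nonneg (mul_nonneg (hm x) (hF x x'))
        (sum_nonneg fun y _ => mul_nonneg (hm y) (hF y x'))
  · by_cases h0 : ∑ y, m y * F y x' = 0
    · simp only [bayesReverse, if_pos h0]
      convert Fintype.sum_ite_eq' x' fun _ => (1 : ℝ)
    · simp only [bayesReverse, if_neg h0, ← sum_div, div_self h0]

lemma mul_bayesReverse_of_posterior_eq (hq : ∀ s x, 0 ≤ q s x) (hF : ∀ x x', 0 ≤ F x x')
    (hr : ∀ s x', r s x' = ∑ x, q s x * F x x')
    (hpost : ∀ s x x', (∑ t, q t x) * F x x' ≠ 0 →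
      q s x / ∑ t, q t x = r s x' / ∑ t, r t x') (s : L) (x x' : Ω) :
    r s x' * bayesReverse (fun x => ∑ t, q t x) F x' x = q s x * F x x' := by
  rw [bayesReverse, ← sum_garbling hr]
  by_cases hw : (∑ t, q t x) * F x x' = 0
  · have hqF : q s x * F x x' = 0 := le_antisymm
      (hw ▸ mul_le_mul_of_nonneg_right (single_le_sum (fun t _ => hq t x) (mem_univ s)) (hF x x'))
      (mul_nonneg (hq s x) (hF x x'))
    by_cases h0 : ∑ t, r t x' = 0
    · have hr0 : r s x' = 0 := by
        refine (sum_eq_zero_iff_of_nonneg fun t _ => ?_).1 h0 s (mem_univ s)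
        rw [hr]
        exact sum_nonneg fun y _ => mul_nonneg (hq t y) (hF y x')
      simp [h0, hqF, hr0]
    · simp [h0, hw, hqF]
  · have hw_le : (∑ t, q t x) * F x x' ≤ ∑ t, r t x' := by
      rw [sum_garbling hr]
      exact single_le_sum (fun y _ => mul_nonneg (sum_nonneg fun t _ => hq t y) (hF y x'))
        (mem_univ x)
    have h0 : ∑ t, r t x' ≠ 0 := ((lt_of_le_of_ne (mul_nonneg (sum_nonneg fun t _ => hq t x)
      (hF x x')) (Ne.symm hw)).trans_le hw_le).ne'
    have hm : ∑ t, q t x ≠ 0 := left_ne_zero_of_mul hw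
    rw [if_neg h0, mul_div_left_comm, ← hpost s x x' hw]
    field_simp

lemma eq_sum_mul_bayesReverse_of_posterior_eq (hq : ∀ s x, 0 ≤ q s x) (hF : IsKernel F)
    (hr : ∀ s x', r s x' = ∑ x, q s x * F x x')
    (hpost : ∀ s x x', (∑ t, q t x) * F x x' ≠ 0 →
      q s x / ∑ t, q t x = r s x' / ∑ t, r t x') (s : L) (x : Ω) :
    q s x = ∑ x', r s x' * bayesReverse (fun x => ∑ t, q t x) F x' x := by
  simp only [mul_bayesReverse_of_posterior_eq hq hF.1 hr hpost, ← mul_sum, hF.2, mul_one]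

end Reverse

theorem strictly_more_informative_lower_entropy_general
    {L Ω : Type*} [Fintype L] [Fintype Ω]
    (μ : L → ℝ) (hμpos : ∀ s, 0 < μ s)
    (Pa Pb : L → Ω → ℝ)
    (hPa : ∀ s, IsKernel (fun (_ : Unit) (x : Ω) => Pa s x))
    (F : Ω → Ω → ℝ) (hFker : IsKernel F)
    (hgarble : ∀ s x', Pb s x' = ∑ x, Pa s x * F x x')
    (hstrict : ¬ AtMostAsInformative Pa Pb) :
    expPostEntropy μ Pa < expPostEntropy μ Pb := by
  have hq : ∀ s x, 0 ≤ μ s * Pa s x := fun s x => mul_nonneg (hμpos s).le ((hPa s).1 () x)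
  have hr : ∀ s x', μ s * Pb s x' = ∑ x, μ s * Pa s x * F x x' := fun s x' => by
    simp only [hgarble, mul_sum, mul_assoc]
  rw [expPostEntropy_eq_condEntropy, expPostEntropy_eq_condEntropy]
  refine (condEntropy_le_of_garbling hq hFker hr).lt_of_ne fun heq => hstrict ?_
  have hpost := posterior_eq_of_condEntropy_eq hq hFker hr heq
  refine ⟨bayesReverse (fun x => ∑ t, μ t * Pa t x) F,
    isKernel_bayesReverse (fun x => sum_nonneg fun t _ => hq t x) hFker.1,
    fun s x => mul_left_cancel₀ (hμpos s).ne' ?_⟩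
  simpa only [mul_sum, mul_assoc] using
    eq_sum_mul_bayesReverse_of_posterior_eq hq hFker hr hpost s x

/-- If `Pa` is strictly more informative than its garbling `Pb = F ∘ Pa`
(witnessed by the garbling kernel `F`, with `Pa` not itself a garbling of `Pb`),
then observing from `Pa` yields strictly lower expected posterior entropy of the
full-support state `S ~ μ` than observing from `Pb`. -/
theorem strictly_more_informative_lower_entropy
    {L Ω : Type*} [Fintype L] [Fintype Ω]
    (μ : L → ℝ) (hμpos : ∀ s, 0 < μ s) (hμ : ∑ s, μ s = 1)
    (Pa Pb : L → Ω → ℝ)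
    (hPa : ∀ s, IsKernel (fun (_ : Unit) (x : Ω) => Pa s x))
    (F : Ω → Ω → ℝ) (hFker : IsKernel F)
    (hgarble : ∀ s x', Pb s x' = ∑ x, Pa s x * F x x')
    (hstrict : ¬ AtMostAsInformative Pa Pb) :
    expPostEntropy μ Pa < expPostEntropy μ Pb :=
  strictly_more_informative_lower_entropy_general μ hμpos Pa Pb hPa F hFker hgarble hstrict
end

section
/- If X_a and S are conditionally independent given X_b (where X_a ~ P_a(·|S) and X_b = F(X_a) for a garbling F witnessing that P_b is at most as informative as P_a), then P_b is at least as informative as P_a. That is, there exists a stochastic kernel mapping X_b-samples to X_a-samples such that for each state s, applying it to P_b(·|s) yields P_a(·|s). -/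
/-!
Take `G` to be the Bayesian posterior of `X_a` given `X_b` under the joint law
`μ s ⬝ Pa s xa ⬝ F xa xb`. Conditional independence says exactly that this posterior is
also the posterior of `X_a` given `X_b` and `S = s`, for every `s`. Hence feeding
`Pb(·|s)` into `G` recovers the joint law of `(X_a, X_b)` given `s`, whose `X_a`-marginal
is `Pa(·|s)`.
-/

open Real Finset

section BayesInverse

variable {L Ω : Type*} [Fintype L] [Fintype Ω]

/-- Where the second marginal of `J` vanishes any distribution would do; we take the point mass. -/
noncomputable def bayesInverse [DecidableEq Ω] (J : Ω → Ω → ℝ) (xb xa : Ω) : ℝ :=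
  if ∑ x, J x xb = 0 then (if xa = xb then 1 else 0) else J xa xb / ∑ x, J x xb

theorem isKernel_bayesInverse [DecidableEq Ω] {J : Ω → Ω → ℝ} (hJ : ∀ x y, 0 ≤ J x y) :
    IsKernel (bayesInverse J) := by
  refine ⟨fun xb xa => ?_, fun xb => ?_⟩ <;> by_cases h : ∑ x, J x xb = 0 <;>
    simp only [bayesInverse, h, if_true, if_false]
  · positivity
  · exact div_nonneg (hJ xa xb) (sum_nonneg fun x _ => hJ x xb)
  · simp
  · rw [← sum_div, div_self h]

theorem mul_bayesInverse_of_condIndep [DecidableEq Ω] {w : L → Ω → Ω → ℝ}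
    (hw : ∀ s xa xb, 0 ≤ w s xa xb)
    (hCI : ∀ s xa xb, w s xa xb * ∑ s', ∑ xa', w s' xa' xb =
      (∑ xa', w s xa' xb) * ∑ s', w s' xa xb)
    (s : L) (xa xb : Ω) :
    (∑ xa', w s xa' xb) * bayesInverse (fun xa xb => ∑ s', w s' xa xb) xb xa = w s xa xb := by
  have hle : ∀ x, w s x xb ≤ ∑ s', ∑ xa', w s' xa' xb := fun x =>
    (single_le_sum (fun x' _ => hw s x' xb) (mem_univ x)).trans
      (single_le_sum (f := fun s' => ∑ xa', w s' xa' xb)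
        (fun s' _ => sum_nonneg fun x' _ => hw s' x' xb) (mem_univ s))
  rw [bayesInverse, sum_comm]
  by_cases h : ∑ s', ∑ xa', w s' xa' xb = 0
  · have hzero : ∀ x, w s x xb = 0 := fun x => le_antisymm (h ▸ hle x) (hw s x xb)
    simp [hzero]
  · rw [if_neg h, mul_div_assoc', div_eq_iff h, hCI]

end BayesInverse

theorem cond_indep_implies_reverse_garbling_general
    {L Ω : Type*} [Fintype L] [Fintype Ω]
    (μ : L → ℝ) (hμpos : ∀ s, 0 < μ s)
    (Pa Pb : L → Ω → ℝ)
    (hPann : ∀ s x, 0 ≤ Pa s x)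
    (F : Ω → Ω → ℝ) (hFker : IsKernel F)
    (hgarble : ∀ s x', Pb s x' = ∑ x, Pa s x * F x x')
    -- conditional independence of `X_a` and `S` given `X_b`:
    -- `P(s, x_a, x_b) ⬝ P(x_b) = P(s, x_b) ⬝ P(x_a, x_b)`
    (hCI : ∀ (s : L) (xa xb : Ω),
      (μ s * Pa s xa * F xa xb) * (∑ s', ∑ xa', μ s' * Pa s' xa' * F xa' xb) =
        (μ s * ∑ xa', Pa s xa' * F xa' xb) *
          (∑ s', μ s' * Pa s' xa * F xa xb)) :
    ∃ G : Ω → Ω → ℝ, IsKernel G ∧ ∀ s xa, Pa s xa = ∑ xb, Pb s xb * G xb xa := by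
  classical
  set w : L → Ω → Ω → ℝ := fun s xa xb => μ s * Pa s xa * F xa xb
  have hw : ∀ s xa xb, 0 ≤ w s xa xb := fun s xa xb =>
    mul_nonneg (mul_nonneg (hμpos s).le (hPann s xa)) (hFker.1 xa xb)
  have hmarg : ∀ s xb, ∑ xa, w s xa xb = μ s * Pb s xb := fun s xb => by
    simp only [w, hgarble, mul_sum, mul_assoc]
  have hCIw : ∀ s xa xb, w s xa xb * ∑ s', ∑ xa', w s' xa' xb =
      (∑ xa', w s xa' xb) * ∑ s', w s' xa xb := fun s xa xb => by
    rw [hmarg, hgarble]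
    exact hCI s xa xb
  refine ⟨bayesInverse fun xa xb => ∑ s, w s xa xb,
    isKernel_bayesInverse fun xa xb => sum_nonneg fun s _ => hw s xa xb, fun s xa => ?_⟩
  apply mul_left_cancel₀ (hμpos s).ne'
  calc μ s * Pa s xa = ∑ xb, w s xa xb := by simp only [w, ← mul_sum, hFker.2, mul_one]
    _ = ∑ xb, (∑ xa', w s xa' xb) * bayesInverse (fun xa xb => ∑ s', w s' xa xb) xb xa :=
        sum_congr rfl fun xb _ => (mul_bayesInverse_of_condIndep hw hCIw s xa xb).symm
    _ = μ s * ∑ xb, Pb s xb * bayesInverse (fun xa xb => ∑ s', w s' xa xb) xb xa := by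
        simp only [hmarg, mul_sum, mul_assoc]

/-- If `X_a` and `S` are conditionally independent given `X_b` (where
`X_a ~ Pa(·|S)` and `X_b = F(X_a)` for a garbling `F` with `Pb = F ∘ Pa`), then
`Pb` is at least as informative as `Pa`: there is a kernel `G` with
`G(X_b) ~ Pa(·|s)` whenever `X_b ~ Pb(·|s)`, for every state `s`. -/
theorem cond_indep_implies_reverse_garbling
    {L Ω : Type*} [Fintype L] [Fintype Ω]
    (μ : L → ℝ) (hμpos : ∀ s, 0 < μ s) (hμ : ∑ s, μ s = 1)
    (Pa Pb : L → Ω → ℝ)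
    (hPann : ∀ s x, 0 ≤ Pa s x) (hPasum : ∀ s, ∑ x, Pa s x = 1)
    (F : Ω → Ω → ℝ) (hFker : IsKernel F)
    (hgarble : ∀ s x', Pb s x' = ∑ x, Pa s x * F x x')
    -- conditional independence of `X_a` and `S` given `X_b`:
    -- `P(s, x_a, x_b) ⬝ P(x_b) = P(s, x_b) ⬝ P(x_a, x_b)`
    (hCI : ∀ (s : L) (xa xb : Ω),
      (μ s * Pa s xa * F xa xb) * (∑ s', ∑ xa', μ s' * Pa s' xa' * F xa' xb) =
        (μ s * ∑ xa', Pa s xa' * F xa' xb) *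
          (∑ s', μ s' * Pa s' xa * F xa xb)) :
    ∃ G : Ω → Ω → ℝ, IsKernel G ∧ ∀ s xa, Pa s xa = ∑ xb, Pb s xb * G xb xa :=
  cond_indep_implies_reverse_garbling_general μ hμpos Pa Pb hPann F hFker hgarble hCI
end

section
/- For sufficiently small positive β, the Boltzmann-rational expected utility without a signal is at most the Boltzmann-rational expected utility with the signal. Precisely: given y_{s,a} (s ∈ {0,1,...,k}, a ∈ {1,...,n}) and probabilities p_s with ∑_s p_s y_{s,a} = y_{0,a} for all a, there exists β₀ > 0 such that for all 0 < β < β₀: (∑_a exp(β y_{0,a}) y_{0,a}) / (∑_a exp(β y_{0,a})) ≤ ∑_{s=1}^k p_s (∑_a exp(β y_{s,a}) y_{s,a}) / (∑_a exp(β y_{s,a})). -/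
/-!
At `β = 0` a Boltzmann value is the plain mean of the utilities, which is linear, so both sides
agree there. The derivative at `β = 0` is the variance of the utilities under the uniform
distribution on actions, `Var v = (2 n²)⁻¹ ∑_{a,b} (v a - v b)²`. This is a positive semidefinite
quadratic form, so its Jensen gap is `∑ p_s Var y_s - Var y_0 = ∑ p_s Var (y_s - y_0) ≥ 0`.
If the gap is positive, the inequality holds strictly for small `β > 0`. If it vanishes, every
`y_s` with `p_s ≠ 0` is `y_0` shifted by a constant `c_s` with `∑ p_s c_s = 0`; Boltzmann values
commute with constant shifts, so both sides are equal for every `β`.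
-/

open Real Finset Filter Topology

theorem HasDerivAt.eventually_pos_right {f : ℝ → ℝ} {f' x₀ : ℝ} (hf : HasDerivAt f f' x₀)
    (hf' : 0 < f') (hx₀ : f x₀ = 0) : ∀ᶠ x in 𝓝[>] x₀, 0 < f x := by
  filter_upwards [nhdsGT_le_nhdsNE x₀
      ((hasDerivAt_iff_tendsto_slope.mp hf).eventually (eventually_gt_nhds hf')),
    self_mem_nhdsWithin] with x hslope hx
  exact pos_of_slope_pos hx hslope hx₀

theorem sum_mul_sub_sum_mul_sq {σ R : Type*} [CommRing R] {S : Finset σ} {p : σ → R}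
    (hp : ∑ s ∈ S, p s = 1) (x : σ → R) :
    ∑ s ∈ S, p s * (x s - ∑ t ∈ S, p t * x t) ^ 2 =
      ∑ s ∈ S, p s * x s ^ 2 - (∑ s ∈ S, p s * x s) ^ 2 := by
  simp only [sub_sq, mul_add, mul_sub, sum_add_distrib, sum_sub_distrib]
  simp only [← sum_mul, ← mul_assoc, mul_comm _ (2 : R), hp]
  simp only [mul_assoc, ← mul_sum]
  ring

section

variable {ι σ : Type*} [Fintype ι] [Fintype σ]

noncomputable def boltzmannValue (β : ℝ) (v : ι → ℝ) : ℝ :=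
  (∑ a, exp (β * v a) * v a) / ∑ a, exp (β * v a)

def sumSqDiff (v : ι → ℝ) : ℝ := ∑ a, ∑ b, (v a - v b) ^ 2

theorem sumSqDiff_nonneg (v : ι → ℝ) : 0 ≤ sumSqDiff v :=
  sum_nonneg fun _ _ => sum_nonneg fun _ _ => sq_nonneg _

theorem sumSqDiff_eq_zero_iff {v : ι → ℝ} : sumSqDiff v = 0 ↔ ∀ a b, v a = v b := by
  simp only [sumSqDiff]
  rw [sum_eq_zero_iff_of_nonneg fun _ _ => sum_nonneg fun _ _ => sq_nonneg _]
  simp [sum_eq_zero_iff_of_nonneg, sq_nonneg, sub_eq_zero]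

theorem sumSqDiff_eq (v : ι → ℝ) :
    sumSqDiff v = 2 * (Fintype.card ι * ∑ a, v a ^ 2 - (∑ a, v a) ^ 2) := by
  simp only [sumSqDiff, sub_sq, sum_add_distrib, sum_sub_distrib, sum_const, card_univ,
    nsmul_eq_mul, ← mul_sum, ← sum_mul]
  ring

theorem sum_mul_sumSqDiff_sub_sumSqDiff {p : σ → ℝ} (hp : ∑ s, p s = 1) (y : σ → ι → ℝ) :
    ∑ s, p s * sumSqDiff (y s) - sumSqDiff (fun a => ∑ s, p s * y s a) =
      ∑ s, p s * sumSqDiff (y s - fun a => ∑ t, p t * y t a) := by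
  set m : ι → ℝ := fun a => ∑ t, p t * y t a
  have hmean (a b : ι) : ∑ t, p t * (y t a - y t b) = m a - m b := by
    simp only [m, mul_sub, sum_sub_distrib]
  calc ∑ s, p s * sumSqDiff (y s) - sumSqDiff m
      = ∑ a, ∑ b, (∑ s, p s * (y s a - y s b) ^ 2 - (m a - m b) ^ 2) := by
        simp only [sumSqDiff, mul_sum, sum_sub_distrib]
        rw [sum_comm]
        simp only [sum_comm (γ := σ)]
    _ = ∑ a, ∑ b, ∑ s, p s * ((y s a - m a) - (y s b - m b)) ^ 2 := by
        refine sum_congr rfl fun a _ => sum_congr rfl fun b _ => ?_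
        simp only [sub_sub_sub_comm]
        rw [← hmean, ← sum_mul_sub_sum_mul_sq hp]
    _ = ∑ s, p s * sumSqDiff (y s - m) := by
        simp only [sumSqDiff, mul_sum, Pi.sub_apply]
        conv_rhs => rw [sum_comm]
        exact sum_congr rfl fun a _ => sum_comm

theorem boltzmannValue_zero (v : ι → ℝ) :
    boltzmannValue 0 v = (∑ a, v a) / Fintype.card ι := by
  simp [boltzmannValue]

noncomputable def signalGain (p : σ → ℝ) (y : σ → ι → ℝ) (β : ℝ) : ℝ :=
  ∑ s, p s * boltzmannValue β (y s) - boltzmannValue β (fun a => ∑ s, p s * y s a)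

theorem signalGain_zero (p : σ → ℝ) (y : σ → ι → ℝ) : signalGain p y 0 = 0 := by
  simp only [signalGain, boltzmannValue_zero, ← mul_div_assoc, ← sum_div, mul_sum]
  rw [sum_comm, sub_self]

variable [Nonempty ι]

theorem sum_exp_mul_pos (β : ℝ) (v : ι → ℝ) : 0 < ∑ a, exp (β * v a) :=
  sum_pos (fun _ _ => exp_pos _) univ_nonempty

theorem boltzmannValue_add_const (β c : ℝ) (v : ι → ℝ) :
    boltzmannValue β (fun a => v a + c) = boltzmannValue β v + c := by
  have hshift (a : ι) : exp (β * (v a + c)) = exp (β * c) * exp (β * v a) := by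
    rw [← exp_add]; ring_nf
  have hD := (sum_exp_mul_pos β v).ne'
  simp only [boltzmannValue, hshift]
  simp only [mul_assoc, ← mul_sum, mul_add, sum_add_distrib, ← sum_mul]
  field_simp

theorem hasDerivAt_boltzmannValue_zero (v : ι → ℝ) :
    HasDerivAt (boltzmannValue · v) (sumSqDiff v / (2 * Fintype.card ι ^ 2)) 0 := by
  have hN : HasDerivAt (fun β => ∑ a, exp (β * v a) * v a) (∑ a, exp (0 * v a) * v a * v a) 0 :=
    HasDerivAt.fun_sum fun a _ => (hasDerivAt_mul_const (v a)).exp.mul_const (v a)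
  have hD : HasDerivAt (fun β => ∑ a, exp (β * v a)) (∑ a, exp (0 * v a) * v a) 0 :=
    HasDerivAt.fun_sum fun a _ => (hasDerivAt_mul_const (v a)).exp
  refine (hN.div hD (sum_exp_mul_pos 0 v).ne').congr_deriv ?_
  have : (Fintype.card ι : ℝ) ≠ 0 := Nat.cast_ne_zero.mpr Fintype.card_ne_zero
  simp only [zero_mul, exp_zero, one_mul, mul_one, sum_const, card_univ, nsmul_eq_mul,
    sumSqDiff_eq]
  field_simp

theorem hasDerivAt_signalGain {p : σ → ℝ} (hp : ∑ s, p s = 1) (y : σ → ι → ℝ) :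
    HasDerivAt (signalGain p y)
      ((∑ s, p s * sumSqDiff (y s - fun a => ∑ t, p t * y t a)) / (2 * Fintype.card ι ^ 2))
      0 := by
  refine ((HasDerivAt.fun_sum fun s _ =>
    (hasDerivAt_boltzmannValue_zero (y s)).const_mul (p s)).sub
      (hasDerivAt_boltzmannValue_zero _)).congr_deriv ?_
  rw [← sum_mul_sumSqDiff_sub_sumSqDiff hp, sub_div, sum_div]
  simp only [mul_div_assoc]

theorem signalGain_eq_zero {p : σ → ℝ} (hp : ∑ s, p s = 1) {y : σ → ι → ℝ}
    (h : ∀ s, p s = 0 ∨ sumSqDiff (y s - fun a => ∑ t, p t * y t a) = 0) (β : ℝ) :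
    signalGain p y β = 0 := by
  set m : ι → ℝ := fun a => ∑ t, p t * y t a
  obtain ⟨a₀⟩ := ‹Nonempty ι›
  have hshift (s : σ) :
      p s * boltzmannValue β (y s) = p s * (boltzmannValue β m + (y s a₀ - m a₀)) := by
    rcases h s with hs | hs
    · rw [hs, zero_mul, zero_mul]
    · have hys : y s = fun a => m a + (y s a₀ - m a₀) := funext fun a => by
        have := sumSqDiff_eq_zero_iff.mp hs a a₀
        simp only [Pi.sub_apply] at this
        linarith
      rw [← boltzmannValue_add_const, ← hys]
  simp only [signalGain, hshift, mul_add, mul_sub, sum_add_distrib, sum_sub_distrib, ← sum_mul,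
    hp, one_mul]
  ring

end

theorem small_beta_signal_helps_general
    {n k : ℕ} (hn : 0 < n)
    (p : Fin k → ℝ) (hp : ∀ s, 0 ≤ p s) (hpsum : ∑ s, p s = 1)
    (y : Fin k → Fin n → ℝ) (y0 : Fin n → ℝ)
    (hy0 : ∀ a, y0 a = ∑ s, p s * y s a) :
    ∃ β₀ > (0 : ℝ), ∀ β : ℝ, 0 < β → β < β₀ →
      (∑ a, Real.exp (β * y0 a) * y0 a) / (∑ a, Real.exp (β * y0 a)) ≤
        ∑ s, p s *
          ((∑ a, Real.exp (β * y s a) * y s a) / (∑ a, Real.exp (β * y s a))) := by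
  have : Nonempty (Fin n) := ⟨⟨0, hn⟩⟩
  obtain rfl : y0 = fun a => ∑ s, p s * y s a := funext hy0
  suffices ∃ β₀ > (0 : ℝ), ∀ β : ℝ, 0 < β → β < β₀ → 0 ≤ signalGain p y β by
    simpa only [signalGain, boltzmannValue, sub_nonneg] using this
  have hterm (s : Fin k) : 0 ≤ p s * sumSqDiff (y s - fun a => ∑ t, p t * y t a) :=
    mul_nonneg (hp s) (sumSqDiff_nonneg _)
  rcases (sum_nonneg fun s _ => hterm s).eq_or_lt with hgap | hgap
  · have h (s : Fin k) := mul_eq_zero.mp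
      ((sum_eq_zero_iff_of_nonneg fun s _ => hterm s).mp hgap.symm s (mem_univ s))
    exact ⟨1, one_pos, fun β _ _ => (signalGain_eq_zero hpsum h β).ge⟩
  · obtain ⟨β₀, hβ₀, hpos⟩ := mem_nhdsGT_iff_exists_Ioo_subset.mp
      ((hasDerivAt_signalGain hpsum y).eventually_pos_right (by positivity) (signalGain_zero p y))
    exact ⟨β₀, hβ₀, fun β hβ hββ₀ => (hpos ⟨hβ, hββ₀⟩).le⟩

/-- For all sufficiently small positive `β`, the Boltzmann-rational expected
utility without the signal is at most the one with the signal. -/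
theorem small_beta_signal_helps
    {n k : ℕ} (hn : 0 < n) (hk : 0 < k)
    (p : Fin k → ℝ) (hp : ∀ s, 0 ≤ p s) (hpsum : ∑ s, p s = 1)
    (y : Fin k → Fin n → ℝ) (y0 : Fin n → ℝ)
    (hy0 : ∀ a, y0 a = ∑ s, p s * y s a) :
    ∃ β₀ > (0 : ℝ), ∀ β : ℝ, 0 < β → β < β₀ →
      (∑ a, Real.exp (β * y0 a) * y0 a) / (∑ a, Real.exp (β * y0 a)) ≤
        ∑ s, p s *
          ((∑ a, Real.exp (β * y s a) * y s a) / (∑ a, Real.exp (β * y s a))) :=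
  small_beta_signal_helps_general hn p hp hpsum y y0 hy0
end

section
/- In the proof of the stateful-to-stateless equivalence, the key conditional independence holds: given the observation–action history, the environment-state history provides no additional information about the internal (virtual) state history, i.e., P(v_0,...,v_t | π, h^{s,o,a}) = P(v_0,...,v_t | π, h^{o,a}), because every dependence between environment states and internal states is mediated by observations and actions. -/
open Finset

/-- A finite-horizon POMDP (state, action, and observation spaces, transition
kernel, observation kernel, initial distribution, and reward). -/
structure POMDP where
  S : Type
  A : Type
  O : Type
  [fS : Fintype S]
  [fA : Fintype A]
  [fO : Fintype O]
  init : S → ℝ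
  tr : S → A → S → ℝ
  obs : S → O → ℝ
  rew : S → A → ℝ

attribute [instance] POMDP.fS POMDP.fA POMDP.fO

/-- The observation–action part of the first `i` steps of a full
state–observation–action trajectory. -/
def oaHist (M : POMDP) {n : ℕ} (τ : Fin n → M.S × M.O × M.A)
    (i : ℕ) (hi : i ≤ n) : List (M.O × M.A) :=
  List.ofFn (fun j : Fin i =>
    ((τ ⟨j.1, lt_of_lt_of_le j.2 hi⟩).2.1, (τ ⟨j.1, lt_of_lt_of_le j.2 hi⟩).2.2))

/-- Probability of a full state–observation–action trajectory under an
ordinary history-dependent stochastic policy. -/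
noncomputable def trajProb (M : POMDP) (pol : List (M.O × M.A) → M.A → ℝ)
    {n : ℕ} (τ : Fin n → M.S × M.O × M.A) : ℝ :=
  ∏ i : Fin n,
    (if h : i.1 = 0 then M.init (τ i).1
      else M.tr (τ ⟨i.1 - 1, by omega⟩).1 (τ ⟨i.1 - 1, by omega⟩).2.2 (τ i).1) *
    M.obs (τ i).1 (τ i).2.1 *
    pol (oaHist M τ i.1 (le_of_lt i.2)) (τ i).2.2

/-- Joint probability of a trajectory together with a history of internal
(virtual) states, under a virtual-state policy `vpol` with initial internal
state `v0`: actions and next internal states are sampled jointly from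
`vpol v h (a, v')`. -/
noncomputable def vsJointProb (M : POMDP) {V : Type} [Fintype V]
    (vpol : V → List (M.O × M.A) → M.A × V → ℝ) (v0 : V)
    {n : ℕ} (τ : Fin n → M.S × M.O × M.A) (vs : Fin n → V) : ℝ :=
  ∏ i : Fin n,
    (if h : i.1 = 0 then M.init (τ i).1
      else M.tr (τ ⟨i.1 - 1, by omega⟩).1 (τ ⟨i.1 - 1, by omega⟩).2.2 (τ i).1) *
    M.obs (τ i).1 (τ i).2.1 *
    vpol (if h : i.1 = 0 then v0 else vs ⟨i.1 - 1, by omega⟩)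
      (oaHist M τ i.1 (le_of_lt i.2)) ((τ i).2.2, vs i)

/-- Probability of a full trajectory under a virtual-state policy,
marginalizing over the internal-state history. -/
noncomputable def vsTrajProb (M : POMDP) {V : Type} [Fintype V]
    (vpol : V → List (M.O × M.A) → M.A × V → ℝ) (v0 : V)
    {n : ℕ} (τ : Fin n → M.S × M.O × M.A) : ℝ :=
  ∑ vs : Fin n → V, vsJointProb M vpol v0 τ vs

/-!
The joint weight of a trajectory and an internal-state history factors as an environment
part, which involves the states, times a policy part, which sees the trajectory only
through its observation–action history. Summing over all trajectories with the given
observation–action history therefore scales numerator and denominator by the same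
positive total environment weight, which cancels.
-/

noncomputable def envProb (M : POMDP) {n : ℕ} (τ : Fin n → M.S × M.O × M.A) : ℝ :=
  ∏ i : Fin n,
    (if h : i.1 = 0 then M.init (τ i).1
      else M.tr (τ ⟨i.1 - 1, by omega⟩).1 (τ ⟨i.1 - 1, by omega⟩).2.2 (τ i).1) *
    M.obs (τ i).1 (τ i).2.1

noncomputable def polProb (M : POMDP) {V : Type}
    (vpol : V → List (M.O × M.A) → M.A × V → ℝ) (v0 : V)
    {n : ℕ} (τ : Fin n → M.S × M.O × M.A) (vs : Fin n → V) : ℝ :=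
  ∏ i : Fin n,
    vpol (if h : i.1 = 0 then v0 else vs ⟨i.1 - 1, by omega⟩)
      (oaHist M τ i.1 (le_of_lt i.2)) ((τ i).2.2, vs i)

section

variable (M : POMDP) {V : Type} [Fintype V] (vpol : V → List (M.O × M.A) → M.A × V → ℝ)
  (v0 : V) {n : ℕ}

theorem vsJointProb_eq_envProb_mul_polProb (τ : Fin n → M.S × M.O × M.A) (vs : Fin n → V) :
    vsJointProb M vpol v0 τ vs = envProb M τ * polProb M vpol v0 τ vs :=
  prod_mul_distrib

theorem vsTrajProb_eq_envProb_mul_sum_polProb (τ : Fin n → M.S × M.O × M.A) :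
    vsTrajProb M vpol v0 τ = envProb M τ * ∑ vs, polProb M vpol v0 τ vs := by
  simp only [vsTrajProb, vsJointProb_eq_envProb_mul_polProb, mul_sum]

end

theorem envProb_nonneg (M : POMDP) (hinitnn : ∀ s, 0 ≤ M.init s)
    (htrnn : ∀ s a s', 0 ≤ M.tr s a s') (hobsnn : ∀ s o, 0 ≤ M.obs s o)
    {n : ℕ} (τ : Fin n → M.S × M.O × M.A) : 0 ≤ envProb M τ := by
  refine prod_nonneg fun i _ => mul_nonneg ?_ (hobsnn _ _)
  split
  · exact hinitnn _
  · exact htrnn _ _ _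

section SameObsActions

variable (M : POMDP) {n : ℕ} {τ τ' : Fin n → M.S × M.O × M.A}
  (h : ∀ i, ((τ' i).2.1, (τ' i).2.2) = ((τ i).2.1, (τ i).2.2))
include h

theorem oaHist_congr (i : ℕ) (hi : i ≤ n) : oaHist M τ' i hi = oaHist M τ i hi :=
  congrArg List.ofFn (funext fun _ => h _)

theorem polProb_congr {V : Type} (vpol : V → List (M.O × M.A) → M.A × V → ℝ) (v0 : V)
    (vs : Fin n → V) : polProb M vpol v0 τ' vs = polProb M vpol v0 τ vs := by
  refine prod_congr rfl fun i _ => ?_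
  rw [oaHist_congr M h, congrArg Prod.snd (h i)]

end SameObsActions

open Classical in
theorem internal_states_indep_of_states_given_oa_history_general
    (M : POMDP) {V : Type} [Fintype V]
    (vpol : V → List (M.O × M.A) → M.A × V → ℝ) (v0 : V)
    (hinitnn : ∀ s, 0 ≤ M.init s) (htrnn : ∀ s a s', 0 ≤ M.tr s a s')
    (hobsnn : ∀ s o, 0 ≤ M.obs s o)
    (n : ℕ) (τ : Fin n → M.S × M.O × M.A) (vs : Fin n → V)
    (hpos : vsTrajProb M vpol v0 τ ≠ 0) :
    vsJointProb M vpol v0 τ vs / vsTrajProb M vpol v0 τ =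
      (∑ τ' ∈ Finset.univ.filter
          (fun τ' : Fin n → M.S × M.O × M.A =>
            ∀ i, ((τ' i).2.1, (τ' i).2.2) = ((τ i).2.1, (τ i).2.2)),
          vsJointProb M vpol v0 τ' vs) /
      (∑ τ' ∈ Finset.univ.filter
          (fun τ' : Fin n → M.S × M.O × M.A =>
            ∀ i, ((τ' i).2.1, (τ' i).2.2) = ((τ i).2.1, (τ i).2.2)),
          vsTrajProb M vpol v0 τ') := by
  set F := univ.filter fun τ' : Fin n → M.S × M.O × M.A =>
    ∀ i, ((τ' i).2.1, (τ' i).2.2) = ((τ i).2.1, (τ i).2.2)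
  have hsame : ∀ τ' ∈ F, ∀ i, ((τ' i).2.1, (τ' i).2.2) = ((τ i).2.1, (τ i).2.2) :=
    fun τ' hτ' => (mem_filter.1 hτ').2
  rw [vsTrajProb_eq_envProb_mul_sum_polProb] at hpos ⊢
  have hE : envProb M τ ≠ 0 := left_ne_zero_of_mul hpos
  have hSE : ∑ τ' ∈ F, envProb M τ' ≠ 0 :=
    (lt_of_lt_of_le ((envProb_nonneg M hinitnn htrnn hobsnn τ).lt_of_ne' hE)
      (single_le_sum (fun τ' _ => envProb_nonneg M hinitnn htrnn hobsnn τ')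
        (mem_filter.2 ⟨mem_univ τ, fun _ => rfl⟩))).ne'
  have hnum : ∑ τ' ∈ F, vsJointProb M vpol v0 τ' vs
      = (∑ τ' ∈ F, envProb M τ') * polProb M vpol v0 τ vs := by
    rw [sum_mul]
    refine sum_congr rfl fun τ' hτ' => ?_
    rw [vsJointProb_eq_envProb_mul_polProb, polProb_congr M (hsame τ' hτ')]
  have hden : ∑ τ' ∈ F, vsTrajProb M vpol v0 τ'
      = (∑ τ' ∈ F, envProb M τ') * ∑ vs', polProb M vpol v0 τ vs' := by
    rw [sum_mul]
    refine sum_congr rfl fun τ' hτ' => ?_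
    simp only [vsTrajProb_eq_envProb_mul_sum_polProb, polProb_congr M (hsame τ' hτ')]
  rw [vsJointProb_eq_envProb_mul_polProb, hnum, hden, mul_div_mul_left _ _ hE,
    mul_div_mul_left _ _ hSE]

open Classical in
/-- Key conditional independence in the stateful-to-stateless equivalence:
given the observation–action history, the environment-state history provides no
additional information about the internal (virtual) state history, i.e.,
`P(v₀,…,v_t | π, h^{s,o,a}) = P(v₀,…,v_t | π, h^{o,a})`. -/
theorem internal_states_indep_of_states_given_oa_history
    (M : POMDP) {V : Type} [Fintype V]
    (vpol : V → List (M.O × M.A) → M.A × V → ℝ) (v0 : V)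
    (hnn : ∀ v h av, 0 ≤ vpol v h av)
    (hsum : ∀ v h, ∑ av : M.A × V, vpol v h av = 1)
    (hinitnn : ∀ s, 0 ≤ M.init s) (htrnn : ∀ s a s', 0 ≤ M.tr s a s')
    (hobsnn : ∀ s o, 0 ≤ M.obs s o)
    (n : ℕ) (τ : Fin n → M.S × M.O × M.A) (vs : Fin n → V)
    (hpos : vsTrajProb M vpol v0 τ ≠ 0) :
    vsJointProb M vpol v0 τ vs / vsTrajProb M vpol v0 τ =
      (∑ τ' ∈ Finset.univ.filter
          (fun τ' : Fin n → M.S × M.O × M.A =>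
            ∀ i, ((τ' i).2.1, (τ' i).2.2) = ((τ i).2.1, (τ i).2.2)),
          vsJointProb M vpol v0 τ' vs) /
      (∑ τ' ∈ Finset.univ.filter
          (fun τ' : Fin n → M.S × M.O × M.A =>
            ∀ i, ((τ' i).2.1, (τ' i).2.2) = ((τ i).2.1, (τ i).2.2)),
          vsTrajProb M vpol v0 τ') :=
  internal_states_indep_of_states_given_oa_history_general M vpol v0 hinitnn htrnn hobsnn n τ vs
    hpos
end
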